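/- In the interior of the light cone {r < t} of ℝ^{1+3}, the D'Alembert operator decomposes in hyperbolic coordinates (s, x) with s = √(t²−r²) as: □v = ∂̄_s∂̄_s v + (2x^a/s) ∂̄_s ∂̄_a v − Σ_a ∂̄_a ∂̄_a v + (3/s) ∂̄_s v, where ∂̄_s = (s/t)∂_t and ∂̄_a = (x^a/t)∂_t + ∂_a, for any C² function v. -/

import Mathlib

/-!
Expand each second-order frame term by the product rule, using `∂_t s = t/s`,
`∂_t (x^a/t) = -x^a/t²`, `∂_a (x^a/t) = 1/t` and the symmetry of second derivatives. For each `a`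
the mixed derivatives `∂_t∂_a v` cancel in `(2x^a/s) ∂̄_s∂̄_a v − ∂̄_a∂̄_a v`; after summing over `a`
and substituting `|x|² = t² − s²`, the first-order terms cancel against `(3/s) ∂̄_s v` and the
coefficients of `∂_t² v` add up to `(s² + |x|²)/t² = 1`.
-/

noncomputable section

/-- Partial derivative in the `i`-th coordinate direction on `ℝ^m`. -/
def pd {m : ℕ} (u : (Fin m → ℝ) → ℝ) (i : Fin m) (x : Fin m → ℝ) : ℝ :=
  fderiv ℝ u x (Pi.single i 1)

/-- `s = √(t² − |x|²)` on `ℝ^{1+3}` (index `0` is time). -/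
def sfun (p : Fin 4 → ℝ) : ℝ :=
  Real.sqrt ((p 0) ^ 2 - ∑ a : Fin 3, (p a.succ) ^ 2)

/-- The frame field `∂̄_s = (s/t)∂_t` acting on functions of `(t,x)`. -/
def Ds (f : (Fin 4 → ℝ) → ℝ) (p : Fin 4 → ℝ) : ℝ :=
  (sfun p / p 0) * pd f 0 p

/-- The frame field `∂̄_a = (x^a/t)∂_t + ∂_a`. -/
def Da (a : Fin 3) (f : (Fin 4 → ℝ) → ℝ) (p : Fin 4 → ℝ) : ℝ :=
  (p a.succ / p 0) * pd f 0 p + pd f a.succ p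

/-- D'Alembert operator on `ℝ^{1+3}`. -/
def Box (u : (Fin 4 → ℝ) → ℝ) (p : Fin 4 → ℝ) : ℝ :=
  pd (pd u 0) 0 p - ∑ a : Fin 3, pd (pd u a.succ) a.succ p

section PartialDerivatives

variable {m : ℕ} {f g : (Fin m → ℝ) → ℝ} {x : Fin m → ℝ}

lemma pd_add (hf : DifferentiableAt ℝ f x) (hg : DifferentiableAt ℝ g x) (i : Fin m) :
    pd (fun y => f y + g y) i x = pd f i x + pd g i x := by
  simp [pd, fderiv_fun_add hf hg]

lemma pd_mul (hf : DifferentiableAt ℝ f x) (hg : DifferentiableAt ℝ g x) (i : Fin m) :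
    pd (fun y => f y * g y) i x = pd f i x * g x + f x * pd g i x := by
  simp only [pd, fderiv_fun_mul hf hg, add_apply, smul_apply, smul_eq_mul]
  ring

lemma pd_div (hf : DifferentiableAt ℝ f x) (hg : DifferentiableAt ℝ g x) (hg0 : g x ≠ 0)
    (i : Fin m) :
    pd (fun y => f y / g y) i x = (pd f i x * g x - f x * pd g i x) / g x ^ 2 := by
  have hinv : HasFDerivAt (fun y => (g y)⁻¹) ((-(g x ^ 2)⁻¹) • fderiv ℝ g x) x :=
    (hasDerivAt_inv hg0).comp_hasFDerivAt x hg.hasFDerivAt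
  simp only [div_eq_mul_inv]
  rw [pd_mul hf hinv.differentiableAt]
  simp only [pd, hinv.fderiv, smul_apply, smul_eq_mul]
  field_simp
  ring

lemma pd_apply (i j : Fin m) : pd (fun y => y j) i x = (Pi.single i (1 : ℝ) : Fin m → ℝ) j := by
  simp [pd, (hasFDerivAt_apply j x).fderiv]

lemma ContDiff.pd {n : WithTop ℕ∞} (hf : ContDiff ℝ (n + 1) f) (i : Fin m) :
    ContDiff ℝ n (pd f i) :=
  (hf.fderiv_right le_rfl).clm_apply contDiff_const

lemma pd_pd (hf : DifferentiableAt ℝ (fderiv ℝ f) x) (i j : Fin m) :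
    pd (pd f i) j x = fderiv ℝ (fderiv ℝ f) x (Pi.single j 1) (Pi.single i 1) := by
  change fderiv ℝ (fun y => fderiv ℝ f y (Pi.single i 1)) x (Pi.single j 1) = _
  simp [fderiv_clm_apply hf (differentiableAt_const _)]

lemma pd_pd_comm (hf : ContDiff ℝ 2 f) (i j : Fin m) : pd (pd f i) j x = pd (pd f j) i x := by
  have hf' : Differentiable ℝ (fderiv ℝ f) := (hf.fderiv_right le_rfl).differentiable one_ne_zero
  rw [pd_pd (hf' x), pd_pd (hf' x)]
  exact hf.contDiffAt.isSymmSndFDerivAt (by simp) _ _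

lemma pd_eq_of_hasDerivAt_update (hf : DifferentiableAt ℝ f x) {i : Fin m} {c : ℝ}
    (hc : HasDerivAt (fun τ => f (Function.update x i τ)) c (x i)) : pd f i x = c := by
  have hf' : HasFDerivAt f (fderiv ℝ f x) (Function.update x i (x i)) := by
    simpa using hf.hasFDerivAt
  exact (hf'.comp_hasDerivAt (x i) (hasDerivAt_update x i (x i))).unique hc

end PartialDerivatives

section LightCone

variable {p : Fin 4 → ℝ}

lemma time_pos_of_mem_cone (hp : √(∑ a : Fin 3, p a.succ ^ 2) < p 0) : 0 < p 0 :=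
  (Real.sqrt_nonneg _).trans_lt hp

lemma sub_sum_sq_pos_of_mem_cone (hp : √(∑ a : Fin 3, p a.succ ^ 2) < p 0) :
    0 < p 0 ^ 2 - ∑ a : Fin 3, p a.succ ^ 2 :=
  sub_pos.2 ((Real.sqrt_lt' (time_pos_of_mem_cone hp)).1 hp)

lemma sfun_pos (hp : √(∑ a : Fin 3, p a.succ ^ 2) < p 0) : 0 < sfun p :=
  Real.sqrt_pos.2 (sub_sum_sq_pos_of_mem_cone hp)

lemma sfun_sq (hp : √(∑ a : Fin 3, p a.succ ^ 2) < p 0) :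
    sfun p ^ 2 = p 0 ^ 2 - ∑ a : Fin 3, p a.succ ^ 2 :=
  Real.sq_sqrt (sub_sum_sq_pos_of_mem_cone hp).le

lemma differentiableAt_sfun (hp : √(∑ a : Fin 3, p a.succ ^ 2) < p 0) :
    DifferentiableAt ℝ sfun p :=
  DifferentiableAt.sqrt (by fun_prop) (sub_sum_sq_pos_of_mem_cone hp).ne'

lemma pd_sfun_zero (hp : √(∑ a : Fin 3, p a.succ ^ 2) < p 0) : pd sfun 0 p = p 0 / sfun p := by
  refine pd_eq_of_hasDerivAt_update (differentiableAt_sfun hp) ?_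
  have hc := ((hasDerivAt_pow 2 (p 0)).sub_const (∑ a : Fin 3, p a.succ ^ 2)).sqrt
    (sub_sum_sq_pos_of_mem_cone hp).ne'
  convert hc using 1
  · ext τ
    simp [sfun]
  · simp only [sfun]
    field_simp
    ring

end LightCone

section Frame

variable {v : (Fin 4 → ℝ) → ℝ} {p : Fin 4 → ℝ}

lemma Ds_Ds (hv : ContDiff ℝ 2 v) (hp : √(∑ a : Fin 3, p a.succ ^ 2) < p 0) :
    Ds (Ds v) p = (sfun p / p 0) ^ 2 * pd (pd v 0) 0 p +
      (p 0 ^ 2 - sfun p ^ 2) / p 0 ^ 3 * pd v 0 p := by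
  have ht := (time_pos_of_mem_cone hp).ne'
  have hs := (sfun_pos hp).ne'
  have hsd := differentiableAt_sfun hp
  have hcoef : DifferentiableAt ℝ (fun q => sfun q / q 0) p := by fun_prop (disch := exact ht)
  have hvt : DifferentiableAt ℝ (pd v 0) p := ((hv.pd 0).differentiable one_ne_zero) p
  change sfun p / p 0 * pd (fun q => sfun q / q 0 * pd v 0 q) 0 p = _
  rw [pd_mul hcoef hvt, pd_div hsd (differentiableAt_apply 0 p) ht,
    pd_sfun_zero hp, pd_apply, Pi.single_eq_same]
  field_simp
  ring

lemma pd_Da (hv : ContDiff ℝ 2 v) (ht : p 0 ≠ 0) (a : Fin 3) (j : Fin 4) :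
    pd (Da a v) j p =
      ((Pi.single j (1 : ℝ) : Fin 4 → ℝ) a.succ * p 0 -
          p a.succ * (Pi.single j (1 : ℝ) : Fin 4 → ℝ) 0) / p 0 ^ 2 * pd v 0 p +
        p a.succ / p 0 * pd (pd v 0) j p + pd (pd v a.succ) j p := by
  have hcoef : DifferentiableAt ℝ (fun q => q a.succ / q 0) p := by fun_prop (disch := exact ht)
  have hvd : ∀ i, DifferentiableAt ℝ (pd v i) p := fun i => ((hv.pd i).differentiable one_ne_zero) p
  have hprod : DifferentiableAt ℝ (fun q => q a.succ / q 0 * pd v 0 q) p := hcoef.mul (hvd 0)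
  change pd (fun q => q a.succ / q 0 * pd v 0 q + pd v a.succ q) j p = _
  rw [pd_add hprod (hvd _), pd_mul hcoef (hvd 0),
    pd_div (differentiableAt_apply _ p) (differentiableAt_apply 0 p) ht, pd_apply, pd_apply]

lemma Ds_Da (hv : ContDiff ℝ 2 v) (ht : p 0 ≠ 0) (a : Fin 3) :
    Ds (Da a v) p = sfun p / p 0 * (p a.succ / p 0 * pd (pd v 0) 0 p -
      p a.succ / p 0 ^ 2 * pd v 0 p + pd (pd v a.succ) 0 p) := by
  rw [Ds, pd_Da hv ht]
  simp only [Pi.single_eq_same, Pi.single_eq_of_ne (Fin.succ_ne_zero a)]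
  ring

lemma Da_Da (hv : ContDiff ℝ 2 v) (ht : p 0 ≠ 0) (a : Fin 3) :
    Da a (Da a v) p = (p a.succ / p 0) ^ 2 * pd (pd v 0) 0 p - p a.succ ^ 2 / p 0 ^ 3 * pd v 0 p +
      2 * (p a.succ / p 0) * pd (pd v a.succ) 0 p + pd v 0 p / p 0 +
        pd (pd v a.succ) a.succ p := by
  rw [Da, pd_Da hv ht, pd_Da hv ht, pd_pd_comm hv 0 a.succ]
  simp only [Pi.single_eq_same, Pi.single_eq_of_ne (Fin.succ_ne_zero a),
    Pi.single_eq_of_ne (Fin.succ_ne_zero a).symm]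
  field_simp
  ring

lemma two_mul_div_sfun_Ds_Da_sub_Da_Da (hv : ContDiff ℝ 2 v)
    (hp : √(∑ a : Fin 3, p a.succ ^ 2) < p 0) (a : Fin 3) :
    2 * p a.succ / sfun p * Ds (Da a v) p - Da a (Da a v) p =
      p a.succ ^ 2 * (pd (pd v 0) 0 p / p 0 ^ 2 - pd v 0 p / p 0 ^ 3) - pd v 0 p / p 0 -
        pd (pd v a.succ) a.succ p := by
  have ht := (time_pos_of_mem_cone hp).ne'
  have hs := (sfun_pos hp).ne'
  rw [Ds_Da hv ht, Da_Da hv ht]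
  field_simp
  ring

end Frame

/-- hyperbolic decomposition of the wave operator inside `{r < t}`:
`□v = ∂̄_s∂̄_s v + (2x^a/s)∂̄_s∂̄_a v − Σ_a ∂̄_a∂̄_a v + (3/s)∂̄_s v`. -/
theorem wave_operator_hyperbolic_decomposition
    (v : (Fin 4 → ℝ) → ℝ) (hv : ContDiff ℝ 2 v)
    (p : Fin 4 → ℝ)
    (hp : Real.sqrt (∑ a : Fin 3, (p a.succ) ^ 2) < p 0) :
    Box v p =
      Ds (Ds v) p + (∑ a : Fin 3, (2 * p a.succ / sfun p) * Ds (Da a v) p) -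
        (∑ a : Fin 3, Da a (Da a v) p) + (3 / sfun p) * Ds v p := by
  have ht := (time_pos_of_mem_cone hp).ne'
  have hs := (sfun_pos hp).ne'
  have hr : ∑ a : Fin 3, p a.succ ^ 2 = p 0 ^ 2 - sfun p ^ 2 := by rw [sfun_sq hp]; ring
  rw [add_sub_assoc, ← Finset.sum_sub_distrib,
    Finset.sum_congr rfl fun a _ => two_mul_div_sfun_Ds_Da_sub_Da_Da hv hp a,
    Finset.sum_sub_distrib, Finset.sum_sub_distrib, ← Finset.sum_mul, hr, Ds_Ds hv hp, Box, Ds]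
  simp only [Finset.sum_const, Finset.card_univ, Fintype.card_fin, nsmul_eq_mul]
  field_simp
  ring
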